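/- For the connection potential A = (1 + XXᵗ)⁻¹ X dXᵗ on M₂(ℝ), the curvature F = dA + A ∧ A equals (1 + XXᵗ)⁻¹ dX ∧ (1 + XᵗX)⁻¹ dXᵗ. -/

import Mathlib

open Matrix

/-- ℝ⁴ identified with M₂(ℝ) via coordinates x (i,j) = x_{ij}. -/
abbrev E : Type := Fin 2 × Fin 2 → ℝ

/-- Partial derivative with respect to the coordinate x_p. -/
noncomputable def pder (p : Fin 2 × Fin 2) (f : E → ℝ) (x : E) : ℝ :=
  deriv (fun t : ℝ => f (x + t • (Pi.single p (1 : ℝ) : E))) 0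

/-- The coordinate matrix X. -/
def Xof (x : E) : Matrix (Fin 2) (Fin 2) ℝ := Matrix.of fun i j => x (i, j)

/-- The dx_p-component of the connection potential A = (1+XXᵗ)⁻¹ X dXᵗ :
    the coefficient of dx_{ij} in dXᵗ is the single-entry matrix E_{ji}. -/
noncomputable def Apot (p : Fin 2 × Fin 2) (x : E) : Matrix (Fin 2) (Fin 2) ℝ :=
  (1 + Xof x * (Xof x)ᵀ)⁻¹ * Xof x * Matrix.single p.2 p.1 (1 : ℝ)

/-- The dx_p ∧ dx_q component of the curvature F = dA + A ∧ A. -/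
noncomputable def curv (p q : Fin 2 × Fin 2) (x : E) : Matrix (Fin 2) (Fin 2) ℝ :=
  (Matrix.of fun i j =>
    pder p (fun y => Apot q y i j) x - pder q (fun y => Apot p y i j) x)
    + (Apot p x * Apot q x - Apot q x * Apot p x)

section Aux

attribute [local instance] Matrix.linftyOpNormedRing Matrix.linftyOpNormedAlgebra

lemma isUnit_one_add_mul_transpose (X : Matrix (Fin 2) (Fin 2) ℝ) :
    IsUnit (1 + X * Xᵀ) := by
  have h : (X * Xᵀ).PosSemidef := by
    simpa [Matrix.conjTranspose_eq_transpose_of_trivial] using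
      Matrix.posSemidef_self_mul_conjTranspose X
  exact (Matrix.PosDef.one.add_posSemidef h).isUnit

lemma isUnit_one_add_transpose_mul (X : Matrix (Fin 2) (Fin 2) ℝ) :
    IsUnit (1 + Xᵀ * X) := by
  have h : (Xᵀ * X).PosSemidef := by
    simpa [Matrix.conjTranspose_eq_transpose_of_trivial] using
      Matrix.posSemidef_conjTranspose_mul_self X
  exact (Matrix.PosDef.one.add_posSemidef h).isUnit

lemma stdBasis_transpose (i j : Fin 2) :
    (Matrix.single i j (1 : ℝ))ᵀ = Matrix.single j i 1 := by
  ext a b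
  simp [Matrix.single, Matrix.transpose_apply, and_comm]

lemma line_eq (x : E) (p : Fin 2 × Fin 2) (t : ℝ) :
    Xof (x + t • (Pi.single p (1 : ℝ) : E)) =
      Xof x + t • Matrix.single p.1 p.2 (1 : ℝ) := by
  ext i j
  rcases p with ⟨a, b⟩
  by_cases h1 : a = i <;> by_cases h2 : b = j <;>
    simp [Xof, Matrix.single, Pi.single_apply, Prod.ext_iff, h1, h2, eq_comm]

lemma entry_hasDerivAt {F : ℝ → Matrix (Fin 2) (Fin 2) ℝ}
    {F' : Matrix (Fin 2) (Fin 2) ℝ} {t : ℝ} (h : HasDerivAt F F' t) (i j : Fin 2) :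
    HasDerivAt (fun s => F s i j) (F' i j) t := by
  let L : Matrix (Fin 2) (Fin 2) ℝ →ₗ[ℝ] ℝ :=
    { toFun := fun A => A i j, map_add' := fun _ _ => rfl, map_smul' := fun _ _ => rfl }
  exact (LinearMap.toContinuousLinearMap L).hasFDerivAt.comp_hasDerivAt t h

lemma hasDerivAt_Apot (x : E) (p q : Fin 2 × Fin 2) (i j : Fin 2) :
    HasDerivAt (fun t : ℝ => Apot q (x + t • (Pi.single p (1 : ℝ) : E)) i j)
      (((-((1 + Xof x * (Xof x)ᵀ)⁻¹ *
          (Matrix.single p.1 p.2 1 * (Xof x)ᵀ +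
            Xof x * (Matrix.single p.1 p.2 1)ᵀ) * (1 + Xof x * (Xof x)ᵀ)⁻¹) * Xof x
        + (1 + Xof x * (Xof x)ᵀ)⁻¹ * Matrix.single p.1 p.2 1) *
        Matrix.single q.2 q.1 1 : Matrix (Fin 2) (Fin 2) ℝ) i j) 0 := by
  set X := Xof x with hX
  set P : Matrix (Fin 2) (Fin 2) ℝ := Matrix.single p.1 p.2 1 with hP
  set Q' : Matrix (Fin 2) (Fin 2) ℝ := Matrix.single q.2 q.1 1 with hQ'
  set G : Matrix (Fin 2) (Fin 2) ℝ := 1 + X * Xᵀ with hG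
  -- the moving matrix
  have hM : HasDerivAt (fun t : ℝ => Xof (x + t • (Pi.single p (1 : ℝ) : E))) P 0 := by
    have e : (fun t : ℝ => Xof (x + t • (Pi.single p (1 : ℝ) : E)))
        = fun t => X + t • P := funext fun t => line_eq x p t
    rw [e]
    have h := ((hasDerivAt_id (0 : ℝ)).smul_const P).const_add X
    simp only [id, one_smul] at h
    exact h
  have hMT : HasDerivAt (fun t : ℝ => (Xof (x + t • (Pi.single p (1 : ℝ) : E)))ᵀ) Pᵀ 0 := by
    have e : (fun t : ℝ => (Xof (x + t • (Pi.single p (1 : ℝ) : E)))ᵀ)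
        = fun t => Xᵀ + t • Pᵀ := by
      funext t; rw [line_eq x p t, Matrix.transpose_add, Matrix.transpose_smul]
    rw [e]
    have h := ((hasDerivAt_id (0 : ℝ)).smul_const Pᵀ).const_add Xᵀ
    simp only [id, one_smul] at h
    exact h
  have h0 : Xof (x + (0 : ℝ) • (Pi.single p (1 : ℝ) : E)) = X := by
    rw [line_eq]; simp [hX]
  have hGc : HasDerivAt
      (fun t : ℝ => 1 + Xof (x + t • (Pi.single p (1 : ℝ) : E)) *
        (Xof (x + t • (Pi.single p (1 : ℝ) : E)))ᵀ)
      (P * Xᵀ + X * Pᵀ) 0 := by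
    have := (hM.mul hMT).const_add (1 : Matrix (Fin 2) (Fin 2) ℝ)
    rwa [h0] at this
  -- derivative of the inverse
  have hu : IsUnit G := isUnit_one_add_mul_transpose X
  have hGinv : HasDerivAt
      (fun t : ℝ => (1 + Xof (x + t • (Pi.single p (1 : ℝ) : E)) *
        (Xof (x + t • (Pi.single p (1 : ℝ) : E)))ᵀ)⁻¹)
      (-(G⁻¹ * (P * Xᵀ + X * Pᵀ) * G⁻¹)) 0 := by
    have e : (fun t : ℝ => (1 + Xof (x + t • (Pi.single p (1 : ℝ) : E)) *
        (Xof (x + t • (Pi.single p (1 : ℝ) : E)))ᵀ)⁻¹)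
        = fun t => Ring.inverse (1 + Xof (x + t • (Pi.single p (1 : ℝ) : E)) *
          (Xof (x + t • (Pi.single p (1 : ℝ) : E)))ᵀ) := by
      funext t; rw [Matrix.nonsing_inv_eq_ringInverse]
    rw [e]
    have hval : (1 + Xof (x + (0 : ℝ) • (Pi.single p (1 : ℝ) : E)) *
        (Xof (x + (0 : ℝ) • (Pi.single p (1 : ℝ) : E)))ᵀ) = (hu.unit : Matrix (Fin 2) (Fin 2) ℝ) := by
      rw [h0, hu.unit_spec]
    have hf := hasFDerivAt_ringInverse (𝕜 := ℝ) hu.unit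
    rw [← hval] at hf
    have := hf.comp_hasDerivAt 0 hGc
    simp [Matrix.coe_units_inv, hu.unit_spec, ContinuousLinearMap.mulLeftRight_apply,
      mul_assoc] at this
    rw [mul_assoc G⁻¹]
    exact this
  -- the full product
  have hGiX := hGinv.mul hM
  rw [h0] at hGiX
  have hA := hGiX.mul_const Q'
  exact entry_hasDerivAt hA i j

lemma pder_Apot (x : E) (p q : Fin 2 × Fin 2) (i j : Fin 2) :
    pder p (fun y => Apot q y i j) x =
      (((-((1 + Xof x * (Xof x)ᵀ)⁻¹ *
          (Matrix.single p.1 p.2 1 * (Xof x)ᵀ +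
            Xof x * (Matrix.single p.1 p.2 1)ᵀ) * (1 + Xof x * (Xof x)ᵀ)⁻¹) * Xof x
        + (1 + Xof x * (Xof x)ᵀ)⁻¹ * Matrix.single p.1 p.2 1) *
        Matrix.single q.2 q.1 1 : Matrix (Fin 2) (Fin 2) ℝ) i j) :=
  (hasDerivAt_Apot x p q i j).deriv

end Aux

lemma key_algebra (X P Q : Matrix (Fin 2) (Fin 2) ℝ) :
    (-((1 + X * Xᵀ)⁻¹ * (P * Xᵀ + X * Pᵀ) * (1 + X * Xᵀ)⁻¹) * X
        + (1 + X * Xᵀ)⁻¹ * P) * Qᵀ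
      - (-((1 + X * Xᵀ)⁻¹ * (Q * Xᵀ + X * Qᵀ) * (1 + X * Xᵀ)⁻¹) * X
        + (1 + X * Xᵀ)⁻¹ * Q) * Pᵀ
      + (((1 + X * Xᵀ)⁻¹ * X * Pᵀ) * ((1 + X * Xᵀ)⁻¹ * X * Qᵀ)
        - ((1 + X * Xᵀ)⁻¹ * X * Qᵀ) * ((1 + X * Xᵀ)⁻¹ * X * Pᵀ))
    = ((1 + X * Xᵀ)⁻¹ * P) * ((1 + Xᵀ * X)⁻¹ * Qᵀ)
      - ((1 + X * Xᵀ)⁻¹ * Q) * ((1 + Xᵀ * X)⁻¹ * Pᵀ) := by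
  have huG : IsUnit (1 + X * Xᵀ) := isUnit_one_add_mul_transpose X
  have hGG : (1 + X * Xᵀ) * (1 + X * Xᵀ)⁻¹ = 1 :=
    Matrix.mul_nonsing_inv _ ((Matrix.isUnit_iff_isUnit_det _).mp huG)
  have hH : (1 + Xᵀ * X)⁻¹ = 1 - Xᵀ * (1 + X * Xᵀ)⁻¹ * X := by
    apply Matrix.inv_eq_right_inv
    have : (1 + Xᵀ * X) * (1 - Xᵀ * (1 + X * Xᵀ)⁻¹ * X)
        = 1 + Xᵀ * X - Xᵀ * ((1 + X * Xᵀ) * (1 + X * Xᵀ)⁻¹) * X := by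
      noncomm_ring
    rw [this, hGG]
    noncomm_ring
  rw [hH]
  noncomm_ring

theorem curvature_of_basic_split_instanton :
    ∀ (x : E) (p q : Fin 2 × Fin 2),
      curv p q x =
        ((1 + Xof x * (Xof x)ᵀ)⁻¹ * Matrix.single p.1 p.2 (1 : ℝ)) *
          ((1 + (Xof x)ᵀ * Xof x)⁻¹ * Matrix.single q.2 q.1 (1 : ℝ)) -
        ((1 + Xof x * (Xof x)ᵀ)⁻¹ * Matrix.single q.1 q.2 (1 : ℝ)) *
          ((1 + (Xof x)ᵀ * Xof x)⁻¹ * Matrix.single p.2 p.1 (1 : ℝ)) := by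
  intro x p q
  have hd : (Matrix.of fun i j =>
      pder p (fun y => Apot q y i j) x - pder q (fun y => Apot p y i j) x)
    = (-((1 + Xof x * (Xof x)ᵀ)⁻¹ *
          (Matrix.single p.1 p.2 1 * (Xof x)ᵀ +
            Xof x * (Matrix.single p.1 p.2 1)ᵀ) * (1 + Xof x * (Xof x)ᵀ)⁻¹) * Xof x
        + (1 + Xof x * (Xof x)ᵀ)⁻¹ * Matrix.single p.1 p.2 1) *
        Matrix.single q.2 q.1 1
      - (-((1 + Xof x * (Xof x)ᵀ)⁻¹ *
          (Matrix.single q.1 q.2 1 * (Xof x)ᵀ +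
            Xof x * (Matrix.single q.1 q.2 1)ᵀ) * (1 + Xof x * (Xof x)ᵀ)⁻¹) * Xof x
        + (1 + Xof x * (Xof x)ᵀ)⁻¹ * Matrix.single q.1 q.2 1) *
        Matrix.single p.2 p.1 1 := by
    ext i j
    simp [pder_Apot, Matrix.sub_apply]
  rw [curv, hd]
  have hPT := stdBasis_transpose p.1 p.2
  have hQT := stdBasis_transpose q.1 q.2
  have := key_algebra (Xof x) (Matrix.single p.1 p.2 1) (Matrix.single q.1 q.2 1)
  rw [hPT, hQT] at this
  simpa [Apot, hPT, hQT] using this
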